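/- arXiv:0908.1298 — 2 statements merged into one kernel-verified Lean document; each statement's English description precedes it below -/
import Mathlib

section
/- Fix integers j, k, M ≥ 1 and a positive integer n with k dividing nj, and set m = nj/k and E = nj. Consider the configuration-model (j,k)-regular LDPC ensemble: each of n variable nodes has j sockets, each of m check nodes has k sockets, and the variable sockets are matched to the check sockets by a uniformly random permutation σ of {1, …, E}. For a labeling z : {1, …, n} → {0, 1, …, M}, each edge inherits the label z_i of its variable node i; z is a degree-M pseudocodeword of the configuration if for every check node, the length-k vector w of labels on its sockets satisfies w_i ≤ Σ_{ℓ≠i} w_ℓ for all i ∈ {1, …, k} and Σ_{i=1}^k w_i is even. Let q = (q_1, …, q_M) be rationals with q_r ≥ 0, Σ q_r ≤ 1, and q_r n ∈ ℤ for all r. Then the expected number (over σ) of degree-M pseudocodewords z of type (q_1 n, …, q_M n) equals C(n; q n) · Coeff[(B^{(M)}(x))^m, x_1^{j q_1 n} ⋯ x_M^{j q_M n}] / C(jn; j q n), where C(n; q n) = n!/((n − Σ q_r n)! ∏ (q_r n)!) and C(jn; j q n) = (jn)!/((jn − Σ j q_r n)! ∏ (j q_r n)!). -/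
open Finset MvPolynomial

/-- The multinomial coefficient `C(k; u) = k! / ((k - ∑ u_r)! ∏ u_r!)`,
taken to be `0` when `∑ u_r > k`. -/
def multCoeff (k : ℕ) {N : ℕ} (u : Fin N → ℕ) : ℕ :=
  if ∑ r, u r ≤ k then
    Nat.factorial k / (Nat.factorial (k - ∑ r, u r) * ∏ r, Nat.factorial (u r))
  else 0

/-- The set `S` of nonnegative integer vectors `u = (u_1, …, u_M)` satisfying
(S-1) `∑ u_r ≤ k`; (S-2) `∑_{r odd} u_r` even; (S-3) if there is `c` with
`u_c = 1` and `u_r = 0` for `c < r ≤ M`, then `c ≤ ∑_{r=1}^{c-1} r u_r`. -/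
def Sset (k M : ℕ) : Finset (Fin M → ℕ) :=
  (Fintype.piFinset fun _ : Fin M => Finset.range (k + 1)) |>.filter
    (fun u : Fin M → ℕ => ∑ r, u r ≤ k ∧
      Even (∑ r ∈ Finset.univ.filter (fun r : Fin M => Odd ((r : ℕ) + 1)), u r) ∧
      ∀ c : Fin M, (u c = 1 ∧ ∀ r : Fin M, c < r → u r = 0) →
        (c : ℕ) + 1 ≤ ∑ r ∈ Finset.univ.filter (fun r : Fin M => r < c), ((r : ℕ) + 1) * u r)

/-- The degree-`M` pseudoweight enumerating function of the length-`k`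
single parity-check code: `B^{(M)}(x) = ∑_{u ∈ S} C(k; u) x_1^{u_1} ⋯ x_M^{u_M}`. -/
noncomputable def Bpoly (k M : ℕ) : MvPolynomial (Fin M) ℝ :=
  ∑ u ∈ Sset k M, MvPolynomial.C (multCoeff k u : ℝ) * ∏ r : Fin M, MvPolynomial.X r ^ u r

/-- The variable node owning variable socket `s` (each of the `n` variable
nodes has `j` sockets). -/
def varNode (n j : ℕ) (s : Fin (n * j)) : Fin n :=
  ⟨s.val / j, by
    rcases Nat.eq_zero_or_pos j with hj | hj
    · exact absurd s.isLt (by simp [hj])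
    · exact (Nat.div_lt_iff_lt_mul hj).mpr s.isLt⟩

/-- The `i`-th socket of check node `c` (each of the `m = nj/k` check nodes has
`k` sockets), as an index among all `nj = mk` sockets. -/
def checkSocket (n j k : ℕ) (c : Fin (n * j / k)) (i : Fin k) : Fin (n * j) :=
  ⟨c.val * k + i.val, by
    have h1 : c.val * k + i.val < (c.val + 1) * k := by
      rw [Nat.succ_mul]; exact Nat.add_lt_add_left i.isLt _
    have h2 : (c.val + 1) * k ≤ (n * j / k) * k := Nat.mul_le_mul_right k c.isLt
    have h3 : (n * j / k) * k ≤ n * j := Nat.div_mul_le_self _ _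
    omega⟩

/-- `z : {1,…,n} → {0,1,…,M}` is a degree-`M` pseudocodeword of the
configuration given by the socket matching `σ`: at every check node, the
vector `w` of labels on its `k` sockets (each edge inheriting the label of
its variable node) satisfies `w_i ≤ ∑_{ℓ ≠ i} w_ℓ` for all `i` and `∑_i w_i`
is even. -/
def IsPseudocodeword (n j k M : ℕ) (σ : Equiv.Perm (Fin (n * j)))
    (z : Fin n → Fin (M + 1)) : Prop :=
  ∀ c : Fin (n * j / k),
    (∀ i : Fin k,
        (z (varNode n j (σ.symm (checkSocket n j k c i))) : ℕ) ≤
          ∑ ℓ ∈ Finset.univ.erase i,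
            (z (varNode n j (σ.symm (checkSocket n j k c ℓ))) : ℕ)) ∧
      Even (∑ i : Fin k, (z (varNode n j (σ.symm (checkSocket n j k c i))) : ℕ))

/-- The number of degree-`M` pseudocodewords of type `u` of the configuration
given by `σ`. -/
noncomputable def countType (n j k M : ℕ) (σ : Equiv.Perm (Fin (n * j)))
    (u : Fin M → ℕ) : ℕ :=
  Nat.card {z : Fin n → Fin (M + 1) //
    IsPseudocodeword n j k M σ z ∧
      ∀ r : Fin M, (Finset.univ.filter fun i : Fin n => (z i : ℕ) = (r : ℕ) + 1).card = u r}

/-- The expected number, over a uniformly random matching `σ` of the `nj`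
variable sockets to the `nj = mk` check sockets, of degree-`M`
pseudocodewords of type `u`. -/
noncomputable def expectType (n j k M : ℕ) (u : Fin M → ℕ) : ℝ :=
  (∑ σ : Equiv.Perm (Fin (n * j)), (countType n j k M σ u : ℝ)) /
    (Nat.factorial (n * j) : ℝ)

/-! Summing over matchings first, the numerator of the expectation is `∑_z #{σ | z is a
pseudocodeword of σ}` over labelings `z` of type `u`. For fixed `z` let `f = z ∘ varNode` be the
induced labeling of the variable sockets. The permutations with `f ∘ σ⁻¹ = g` form a coset of the
stabilizer of `f`, of size `∏_b (#f⁻¹{b})!`, and exist iff `g` has the fibre sizes of `f`, i.e.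
type `j u`. So the count is `∏_b (#f⁻¹{b})!` times the number of check-socket labelings of type
`j u` all of whose rows are valid. A word of length `k` is valid iff its type lies in `S`, and
`C(k; u)` words have type `u`, so `B^{(M)} = ∑_{w valid} x^{type w}` and that number is the
coefficient of `x^{j u}` in `B^m`. Finally `(nj)! = C(nj; j u) ∏_b (#f⁻¹{b})!`. -/
section Fibers

variable {α β : Type*} [Fintype α] [DecidableEq β]

def fiberCard (f : α → β) (b : β) : ℕ := #{a | f a = b}

lemma fiberCard_eq_card_subtype (f : α → β) (b : β) :
    fiberCard f b = Fintype.card {a // f a = b} :=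
  (Fintype.card_subtype _).symm

lemma fiberCard_comp_equiv {γ : Type*} [Fintype γ] (e : γ ≃ α) (f : α → β) :
    fiberCard (f ∘ e) = fiberCard f := by
  ext b
  simp only [fiberCard_eq_card_subtype]
  exact Fintype.card_congr (e.subtypeEquiv fun _ => Iff.rfl)

lemma exists_perm_comp_eq {f g : α → β} (h : fiberCard f = fiberCard g) :
    ∃ σ : Equiv.Perm α, f ∘ σ = g := by
  have e : ∀ b, {a // g a = b} ≃ {a // f a = b} := fun b =>
    Fintype.equivOfCardEq (by rw [← fiberCard_eq_card_subtype, ← fiberCard_eq_card_subtype, h])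
  exact ⟨Equiv.ofFiberEquiv e, funext (Equiv.ofFiberEquiv_map e)⟩

lemma fiberCard_comp_fst {γ : Type*} [Fintype γ] (z : α → β) (b : β) :
    fiberCard (z ∘ Prod.fst : α × γ → β) b = fiberCard z b * Fintype.card γ := by
  simp only [fiberCard, Function.comp_apply, ← univ_product_univ,
    filter_product_left (fun a => z a = b), card_product, card_univ]

lemma fiberCard_uncurry {γ : Type*} [Fintype γ] (g : α × γ → β) (b : β) :
    fiberCard g b = ∑ a, fiberCard (fun c => g (a, c)) b := by
  simp only [fiberCard, card_filter, Fintype.sum_prod_type]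

variable [Fintype β]

lemma sum_fiberCard (f : α → β) : ∑ b, fiberCard f b = Fintype.card α :=
  (card_eq_sum_card_fiberwise fun a _ => mem_univ (f a)).symm

lemma exists_fiberCard_eq (v : β → ℕ) (hv : ∑ b, v b = Fintype.card α) :
    ∃ f : α → β, fiberCard f = v := by
  obtain ⟨e⟩ : Nonempty (α ≃ Σ b, Fin (v b)) :=
    Fintype.card_eq.mp (by simp [Fintype.card_sigma, hv])
  refine ⟨Sigma.fst ∘ e, ?_⟩
  ext b
  rw [fiberCard_comp_equiv, fiberCard_eq_card_subtype, Fintype.card_congr (Equiv.sigmaSubtype b),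
    Fintype.card_fin]

variable [DecidableEq α]

lemma card_perm_comp_eq (f g : α → β) :
    #{σ : Equiv.Perm α | f ∘ σ = g} =
      if fiberCard f = fiberCard g then ∏ b, (fiberCard f b).factorial else 0 := by
  split_ifs with h
  · obtain ⟨σ₀, rfl⟩ := exists_perm_comp_eq h
    have e : {τ : Equiv.Perm α // f ∘ τ = f} ≃ {σ : Equiv.Perm α // f ∘ σ = f ∘ σ₀} :=
      (Equiv.mulRight σ₀).subtypeEquiv fun τ => by
        simp only [Equiv.coe_mulRight, Equiv.Perm.coe_mul, ← Function.comp_assoc]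
        exact σ₀.surjective.injective_comp_right.eq_iff.symm
    rw [← Fintype.card_subtype, ← Fintype.card_congr e, DomMulAct.stabilizer_card]
    simp only [fiberCard_eq_card_subtype]
  · refine card_eq_zero.mpr (filter_eq_empty_iff.mpr fun σ _ hσ => h ?_)
    rw [← hσ, fiberCard_comp_equiv]

lemma card_perm_filter_comp_symm (f : α → β) (P : (α → β) → Prop) [DecidablePred P] :
    #{σ : Equiv.Perm α | P (f ∘ σ.symm)} =
      #{g | P g ∧ fiberCard g = fiberCard f} * ∏ b, (fiberCard f b).factorial := by
  have hinv : #{σ : Equiv.Perm α | P (f ∘ σ.symm)} = #{σ : Equiv.Perm α | P (f ∘ σ)} :=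
    card_nbij' (·⁻¹) (·⁻¹) (fun σ hσ => by simpa [Equiv.Perm.inv_def] using hσ)
      (fun σ hσ => by simpa [Equiv.Perm.inv_def] using hσ) (fun σ _ => inv_inv σ)
      (fun σ _ => inv_inv σ)
  rw [hinv, card_eq_sum_card_fiberwise (f := fun σ : Equiv.Perm α => f ∘ σ) (t := univ)
    fun _ _ => mem_coe.mpr (mem_univ _), card_filter, sum_mul]
  refine sum_congr rfl fun g _ => ?_
  rw [filter_filter]
  by_cases hg : P g
  · rw [filter_congr fun (σ : Equiv.Perm α) _ => and_iff_right_of_imp fun h => h ▸ hg,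
      card_perm_comp_eq]
    simp [hg, eq_comm]
  · simp only [hg, false_and, if_false, zero_mul, card_eq_zero, filter_eq_empty_iff]
    rintro σ - ⟨h, rfl⟩
    exact hg h

lemma card_fiberCard_eq (v : β → ℕ) (hv : ∑ b, v b = Fintype.card α) :
    #{g : α → β | fiberCard g = v} = Nat.multinomial univ v := by
  obtain ⟨f, rfl⟩ := exists_fiberCard_eq v hv
  have h := card_perm_filter_comp_symm f fun _ => True
  simp only [filter_true, card_univ, Fintype.card_perm, true_and] at h
  rw [← hv, ← Nat.multinomial_spec] at h
  exact Nat.eq_of_mul_eq_mul_right (prod_pos fun b _ => Nat.factorial_pos _) (by linarith)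

end Fibers

section LabelType

variable {ι : Type*} [Fintype ι] {M : ℕ}

def labelType (w : ι → Fin (M + 1)) (r : Fin M) : ℕ := fiberCard w r.succ

def fiberSizes (N : ℕ) (u : Fin M → ℕ) : Fin (M + 1) → ℕ := Fin.cons (N - ∑ r, u r) u

lemma fiberCard_eq_fiberSizes (w : ι → Fin (M + 1)) :
    fiberCard w = fiberSizes (Fintype.card ι) (labelType w) := by
  have h := sum_fiberCard w
  rw [Fin.sum_univ_succ] at h
  ext b
  cases b using Fin.cases with
  | zero => simp only [fiberSizes, Fin.cons_zero, labelType]; omega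
  | succ r => rfl

lemma sum_labelType_le (w : ι → Fin (M + 1)) : ∑ r, labelType w r ≤ Fintype.card ι := by
  rw [← sum_fiberCard w, Fin.sum_univ_succ]
  exact Nat.le_add_left _ _

lemma fiberCard_eq_fiberSizes_iff (w : ι → Fin (M + 1)) (u : Fin M → ℕ) :
    fiberCard w = fiberSizes (Fintype.card ι) u ↔ labelType w = u := by
  refine ⟨fun h => funext fun r => congrFun h r.succ, ?_⟩
  rintro rfl
  exact fiberCard_eq_fiberSizes w

lemma fiberCard_eq_iff_labelType_eq (w w' : ι → Fin (M + 1)) :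
    fiberCard w = fiberCard w' ↔ labelType w = labelType w' := by
  rw [fiberCard_eq_fiberSizes w', fiberCard_eq_fiberSizes_iff]

lemma multCoeff_eq_multinomial {k : ℕ} {u : Fin M → ℕ} (h : ∑ r, u r ≤ k) :
    multCoeff k u = Nat.multinomial univ (fiberSizes k u) := by
  rw [multCoeff, if_pos h, Nat.multinomial, Fin.sum_univ_succ, Fin.prod_univ_succ]
  simp only [fiberSizes, Fin.cons_zero, Fin.cons_succ, Nat.sub_add_cancel h]

lemma factorial_eq_multCoeff_mul_prod {k : ℕ} {u : Fin M → ℕ} (h : ∑ r, u r ≤ k) :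
    k.factorial = multCoeff k u * ∏ b, (fiberSizes k u b).factorial := by
  rw [multCoeff_eq_multinomial h, mul_comm, Nat.multinomial_spec, Fin.sum_univ_succ]
  simp [fiberSizes, Nat.sub_add_cancel h]

lemma card_labelType_eq [DecidableEq ι] (u : Fin M → ℕ) :
    #{w : ι → Fin (M + 1) | labelType w = u} = multCoeff (Fintype.card ι) u := by
  by_cases h : ∑ r, u r ≤ Fintype.card ι
  · simp_rw [← fiberCard_eq_fiberSizes_iff]
    rw [card_fiberCard_eq _ (by rw [Fin.sum_univ_succ]; simp [fiberSizes, Nat.sub_add_cancel h]),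
      multCoeff_eq_multinomial h]
  · rw [multCoeff, if_neg h, card_eq_zero, filter_eq_empty_iff]
    rintro w - rfl
    exact h (sum_labelType_le w)

lemma sum_val_eq_sum_labelType (w : ι → Fin (M + 1)) :
    ∑ i, (w i : ℕ) = ∑ r : Fin M, ((r : ℕ) + 1) * labelType w r := by
  have h : ∀ b, ∑ i with w i = b, (w i : ℕ) = (b : ℕ) * fiberCard w b := fun b => by
    rw [sum_congr rfl fun i hi => by rw [(mem_filter.mp hi).2], sum_const, smul_eq_mul, mul_comm,
      fiberCard]
  rw [← sum_fiberwise univ w fun i => (w i : ℕ), Fin.sum_univ_succ]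
  simp [h, labelType]

end LabelType

lemma even_sum_mul_iff {α : Type*} [DecidableEq α] (s : Finset α) (a t : α → ℕ) :
    Even (∑ r ∈ s, a r * t r) ↔ Even (∑ r ∈ s with Odd (a r), t r) := by
  induction s using Finset.induction_on with
  | empty => simp
  | insert x s hx ih =>
    rw [sum_insert hx, filter_insert]
    split_ifs with ha
    · rw [sum_insert (fun h => hx (mem_filter.mp h).1), Nat.even_add, Nat.even_add, ih,
        Nat.even_mul, iff_false_intro (Nat.not_even_iff_odd.mpr ha), false_or]
    · rw [Nat.even_add, ih,
        iff_true_left (Nat.even_mul.mpr (Or.inl (Nat.not_odd_iff_even.mp ha)))]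

section SingleParityCheck

variable {M : ℕ}

lemma sum_eq_sum_lt_add_of_eq_zero {α R : Type*} [Fintype α] [LinearOrder α] [AddCommMonoid R]
    (f : α → R) (c : α) (htop : ∀ r, c < r → f r = 0) : ∑ r, f r = ∑ r with r < c, f r + f c := by
  rw [← sum_filter_add_sum_filter_not univ (· < c)]
  congr 1
  exact sum_eq_single_of_mem c (by simp) fun r hr hrc =>
    htop r (lt_of_le_of_ne (not_lt.mp (mem_filter.mp hr).2) (Ne.symm hrc))

lemma sset_top_condition_iff (t : Fin M → ℕ) :
    (∀ c : Fin M, (t c = 1 ∧ ∀ r, c < r → t r = 0) →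
        (c : ℕ) + 1 ≤ ∑ r with r < c, ((r : ℕ) + 1) * t r) ↔
      ∀ c : Fin M, t c ≠ 0 → 2 * ((c : ℕ) + 1) ≤ ∑ r : Fin M, ((r : ℕ) + 1) * t r := by
  have hsplit : ∀ c : Fin M, (∀ r, c < r → t r = 0) → ∑ r : Fin M, ((r : ℕ) + 1) * t r =
      ∑ r with r < c, ((r : ℕ) + 1) * t r + ((c : ℕ) + 1) * t c := fun c htop =>
    sum_eq_sum_lt_add_of_eq_zero _ c fun r hr => by rw [htop r hr, mul_zero]
  constructor
  · intro h c hc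
    by_cases htop : ∃ r, c < r ∧ t r ≠ 0
    · obtain ⟨r, hcr, hr⟩ := htop
      have hcr' : (c : ℕ) < r := hcr
      calc 2 * ((c : ℕ) + 1) ≤ ((c : ℕ) + 1) * t c + ((r : ℕ) + 1) * t r := by
            nlinarith [Nat.one_le_iff_ne_zero.mpr hc, Nat.one_le_iff_ne_zero.mpr hr]
        _ = ∑ x ∈ {c, r}, ((x : ℕ) + 1) * t x := by rw [sum_pair hcr.ne]
        _ ≤ ∑ x : Fin M, ((x : ℕ) + 1) * t x := sum_le_sum_of_subset (subset_univ _)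
    · push Not at htop
      rw [hsplit c htop]
      obtain h1 | h2 : t c = 1 ∨ 2 ≤ t c := by omega
      · have := h c ⟨h1, htop⟩
        rw [h1]
        omega
      · have := Nat.mul_le_mul_left ((c : ℕ) + 1) h2
        omega
  · rintro h c ⟨h1, htop⟩
    have := h c (by omega)
    rw [hsplit c htop, h1] at this
    omega

lemma forall_two_mul_le_iff_labelType {ι : Type*} [Fintype ι] (w : ι → Fin (M + 1)) (S : ℕ) :
    (∀ i, 2 * (w i : ℕ) ≤ S) ↔ ∀ c : Fin M, labelType w c ≠ 0 → 2 * ((c : ℕ) + 1) ≤ S := by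
  have hne : ∀ c, labelType w c ≠ 0 ↔ ∃ i, w i = c.succ := fun c => by
    simp [labelType, fiberCard]
  simp_rw [hne]
  constructor
  · rintro h c ⟨i, hi⟩
    simpa [hi] using h i
  · intro h i
    rcases Fin.eq_zero_or_eq_succ (w i) with h0 | ⟨c, hc⟩
    · simp [h0]
    · simpa [hc] using h c ⟨i, hc⟩

def IsSPCPseudocodeword {ι : Type*} [Fintype ι] [DecidableEq ι] (w : ι → ℕ) : Prop :=
  (∀ i, w i ≤ ∑ ℓ ∈ univ.erase i, w ℓ) ∧ Even (∑ i, w i)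

lemma isSPCPseudocodeword_iff_labelType_mem {k : ℕ} (w : Fin k → Fin (M + 1)) :
    IsSPCPseudocodeword (fun i => (w i : ℕ)) ↔ labelType w ∈ Sset k M := by
  have hle : ∀ i, (w i : ℕ) ≤ ∑ ℓ ∈ univ.erase i, (w ℓ : ℕ) ↔ 2 * (w i : ℕ) ≤ ∑ ℓ, (w ℓ : ℕ) :=
    fun i => by rw [← add_sum_erase univ _ (mem_univ i)]; omega
  have hsum : ∑ r, labelType w r ≤ k := by simpa using sum_labelType_le w
  have hbound : ∀ r, labelType w r < k + 1 := fun r =>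
    Nat.lt_succ_of_le ((single_le_sum (fun _ _ => Nat.zero_le _) (mem_univ r)).trans hsum)
  simp only [IsSPCPseudocodeword, Sset, mem_filter, Fintype.mem_piFinset, mem_range, hle,
    sum_val_eq_sum_labelType, even_sum_mul_iff, forall_two_mul_le_iff_labelType,
    sset_top_condition_iff]
  tauto

end SingleParityCheck

section EnumeratingFunction

variable {k M : ℕ}

lemma Bpoly_eq_sum_monomial :
    Bpoly k M = ∑ w : Fin k → Fin (M + 1) with labelType w ∈ Sset k M,
      monomial (Finsupp.equivFunOnFinite.symm (labelType w)) 1 := by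
  rw [Bpoly, ← sum_fiberwise_of_maps_to (g := labelType) (t := Sset k M)
    fun w hw => (mem_filter.mp hw).2]
  refine sum_congr rfl fun u hu => ?_
  rw [filter_filter, filter_congr fun w _ => and_iff_right_of_imp fun h => h ▸ hu,
    sum_congr rfl fun w hw => by rw [(mem_filter.mp hw).2], sum_const, card_labelType_eq,
    Fintype.card_fin, nsmul_eq_mul, ← map_natCast C, C_mul_monomial, mul_one, monomial_eq,
    Finsupp.prod_fintype _ _ fun _ => pow_zero _]
  rfl

lemma coeff_Bpoly_pow (m : ℕ) (v : Fin M → ℕ) :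
    coeff (Finsupp.equivFunOnFinite.symm v) (Bpoly k M ^ m) =
      #{W : Fin m → Fin k → Fin (M + 1) |
        (∀ c, labelType (W c) ∈ Sset k M) ∧ ∑ c, labelType (W c) = v} := by
  rw [← Fin.prod_const, Bpoly_eq_sum_monomial, prod_univ_sum, coeff_sum]
  simp_rw [← monomial_sum_one, coeff_monomial]
  rw [sum_boole]
  norm_cast
  congr 1
  ext W
  simp only [mem_filter, Fintype.mem_piFinset, mem_univ, true_and, Finsupp.ext_iff, funext_iff,
    Finsupp.finsetSum_apply, Finsupp.coe_equivFunOnFinite_symm, Finset.sum_apply]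

end EnumeratingFunction

section Configuration

variable {n j k M : ℕ}

lemma varNode_finProdFinEquiv (i : Fin n) (t : Fin j) :
    varNode n j (finProdFinEquiv (i, t)) = i := by
  ext
  change ((t : ℕ) + j * i) / j = i
  rw [Nat.add_mul_div_left _ _ (Fin.pos t), Nat.div_eq_of_lt t.isLt, zero_add]

lemma labelType_comp_varNode (z : Fin n → Fin (M + 1)) :
    labelType (z ∘ varNode n j) = fun r => j * labelType z r := by
  have h : (z ∘ varNode n j) ∘ finProdFinEquiv = z ∘ Prod.fst :=
    funext fun p => congrArg z (varNode_finProdFinEquiv p.1 p.2)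
  ext r
  rw [labelType, ← fiberCard_comp_equiv finProdFinEquiv, h, fiberCard_comp_fst, Fintype.card_fin,
    mul_comm, labelType]

variable (n j k) in
def checkRows {X : Type*} (g : Fin (n * j) → X) (c : Fin (n * j / k)) (i : Fin k) : X :=
  g (checkSocket n j k c i)

def checkSocketEquiv (h : n * j / k * k = n * j) : Fin (n * j / k) × Fin k ≃ Fin (n * j) :=
  finProdFinEquiv.trans (finCongr h)

lemma checkSocketEquiv_apply (h : n * j / k * k = n * j) (c : Fin (n * j / k)) (i : Fin k) :
    checkSocketEquiv h (c, i) = checkSocket n j k c i := by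
  ext
  simp [checkSocketEquiv, checkSocket]
  ring

def checkRowsEquiv (X : Type*) (h : n * j / k * k = n * j) :
    (Fin (n * j) → X) ≃ (Fin (n * j / k) → Fin k → X) :=
  ((checkSocketEquiv h).arrowCongr (Equiv.refl X)).symm.trans (Equiv.curry _ _ _)

lemma coe_checkRowsEquiv (X : Type*) (h : n * j / k * k = n * j) :
    ⇑(checkRowsEquiv X h) = checkRows n j k := by
  ext g c i
  simp [checkRowsEquiv, checkRows, checkSocketEquiv_apply]

lemma labelType_eq_sum_checkRows (h : n * j / k * k = n * j) (g : Fin (n * j) → Fin (M + 1)) :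
    labelType g = ∑ c, labelType (checkRows n j k g c) := by
  ext r
  rw [labelType, ← fiberCard_comp_equiv (checkSocketEquiv h), fiberCard_uncurry, Finset.sum_apply]
  simp [labelType, checkSocketEquiv_apply]
  rfl

end Configuration

section Expectation

variable {n j k M : ℕ}

lemma isPseudocodeword_iff (σ : Equiv.Perm (Fin (n * j))) (z : Fin n → Fin (M + 1)) :
    IsPseudocodeword n j k M σ z ↔
      ∀ c, labelType (checkRows n j k ((z ∘ varNode n j) ∘ σ.symm) c) ∈ Sset k M :=
  forall_congr' fun c =>
    isSPCPseudocodeword_iff_labelType_mem (checkRows n j k ((z ∘ varNode n j) ∘ σ.symm) c)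

lemma countType_eq (σ : Equiv.Perm (Fin (n * j))) (u : Fin M → ℕ) :
    countType n j k M σ u =
      #{z : Fin n → Fin (M + 1) |
        (∀ c, labelType (checkRows n j k ((z ∘ varNode n j) ∘ σ.symm) c) ∈ Sset k M) ∧
          labelType z = u} := by
  classical
  rw [countType, Nat.card_eq_fintype_card, Fintype.card_subtype]
  congr 1
  ext z
  simp [isPseudocodeword_iff, funext_iff, labelType, fiberCard, Fin.ext_iff]

lemma card_perm_isPseudocodeword (z : Fin n → Fin (M + 1)) :
    #{σ : Equiv.Perm (Fin (n * j)) |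
        ∀ c, labelType (checkRows n j k ((z ∘ varNode n j) ∘ σ.symm) c) ∈ Sset k M} =
      #{g | (∀ c, labelType (checkRows n j k g c) ∈ Sset k M) ∧
          labelType g = fun r => j * labelType z r} *
        ∏ b, (fiberCard (z ∘ varNode n j) b).factorial := by
  rw [card_perm_filter_comp_symm (z ∘ varNode n j)
    fun g => ∀ c, labelType (checkRows n j k g c) ∈ Sset k M]
  simp_rw [fiberCard_eq_iff_labelType_eq, labelType_comp_varNode]

lemma card_goodLabelings (h : n * j / k * k = n * j) (v : Fin M → ℕ) :
    (#{g : Fin (n * j) → Fin (M + 1) |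
        (∀ c, labelType (checkRows n j k g c) ∈ Sset k M) ∧ labelType g = v} : ℝ) =
      coeff (Finsupp.equivFunOnFinite.symm v) (Bpoly k M ^ (n * j / k)) := by
  rw [coeff_Bpoly_pow]
  exact_mod_cast card_equiv (checkRowsEquiv _ h) fun g => by
    simp [coe_checkRowsEquiv, labelType_eq_sum_checkRows h]

lemma sum_countType (u : Fin M → ℕ) :
    ∑ σ, countType n j k M σ u =
      multCoeff n u * (#{g | (∀ c, labelType (checkRows n j k g c) ∈ Sset k M) ∧
          labelType g = fun r => j * u r} *
        ∏ b, (fiberSizes (n * j) (fun r => j * u r) b).factorial) := by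
  calc ∑ σ, countType n j k M σ u
      = ∑ z : Fin n → Fin (M + 1) with labelType z = u, #{σ : Equiv.Perm (Fin (n * j)) |
          ∀ c, labelType (checkRows n j k ((z ∘ varNode n j) ∘ σ.symm) c) ∈ Sset k M} := by
        simp_rw [countType_eq, card_filter]
        rw [sum_comm, sum_filter]
        refine sum_congr rfl fun z _ => ?_
        split_ifs with hz <;> simp [hz]
    _ = _ := by
        have hA := card_labelType_eq (ι := Fin n) u
        rw [Fintype.card_fin] at hA
        rw [← hA]
        refine sum_const_nat fun z hz => ?_
        rw [card_perm_isPseudocodeword, fiberCard_eq_fiberSizes, labelType_comp_varNode,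
          (mem_filter.mp hz).2, Fintype.card_fin]

theorem expectType_eq (hdvd : k ∣ n * j) (u : Fin M → ℕ) :
    expectType n j k M u =
      multCoeff n u *
          coeff (Finsupp.equivFunOnFinite.symm fun r => j * u r) (Bpoly k M ^ (n * j / k)) /
        multCoeff (j * n) (fun r => j * u r) := by
  have h := Nat.div_mul_cancel hdvd
  rw [expectType, ← Nat.cast_sum, sum_countType, ← card_goodLabelings h]
  by_cases hu : ∑ r, u r ≤ n
  · have hju : ∑ r, j * u r ≤ n * j := by
      rw [← mul_sum, mul_comm n j]
      exact Nat.mul_le_mul_left j hu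
    have hD : multCoeff (j * n) (fun r => j * u r) = multCoeff (n * j) (fun r => j * u r) := by
      rw [mul_comm]
    rw [factorial_eq_multCoeff_mul_prod hju, hD, multCoeff_eq_multinomial hju]
    have := Nat.multinomial_pos univ (fiberSizes (n * j) fun r => j * u r)
    have := prod_pos fun b (_ : b ∈ univ) =>
      Nat.factorial_pos (fiberSizes (n * j) (fun r => j * u r) b)
    push_cast
    field_simp
  · simp [multCoeff, hu]

end Expectation

theorem stmt_10_general (n j k M : ℕ)
    (hdvd : k ∣ n * j)
    (q : Fin M → ℚ) :
    expectType n j k M (fun r => ((n : ℚ) * q r).num.toNat) =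
      (multCoeff n (fun r => ((n : ℚ) * q r).num.toNat) : ℝ) *
          MvPolynomial.coeff
            (Finsupp.equivFunOnFinite.symm fun r => j * ((n : ℚ) * q r).num.toNat)
            ((Bpoly k M) ^ (n * j / k)) /
        (multCoeff (j * n) (fun r => j * ((n : ℚ) * q r).num.toNat) : ℝ) :=
  expectType_eq hdvd _

/-- in the configuration-model `(j,k)`-regular LDPC ensemble, the
expected number of degree-`M` pseudocodewords of type `(q_1 n, …, q_M n)`
equals `C(n; qn) ⋅ Coeff[(B^{(M)}(x))^m, x^{jqn}] / C(jn; jqn)`. -/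
theorem stmt_10 (n j k M : ℕ) (hn : 0 < n) (hj : 1 ≤ j) (hk : 1 ≤ k) (hM : 1 ≤ M)
    (hdvd : k ∣ n * j)
    (q : Fin M → ℚ) (hq0 : ∀ r, 0 ≤ q r) (hq1 : ∑ r, q r ≤ 1)
    (hqn : ∀ r, ((n : ℚ) * q r).den = 1) :
    expectType n j k M (fun r => ((n : ℚ) * q r).num.toNat) =
      (multCoeff n (fun r => ((n : ℚ) * q r).num.toNat) : ℝ) *
          MvPolynomial.coeff
            (Finsupp.equivFunOnFinite.symm fun r => j * ((n : ℚ) * q r).num.toNat)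
            ((Bpoly k M) ^ (n * j / k)) /
        (multCoeff (j * n) (fun r => j * ((n : ℚ) * q r).num.toNat) : ℝ) :=
  stmt_10_general n j k M hdvd q
end

section
/- Fix integers j, k, M ≥ 1. Let Ω ⊆ ℝ^M be an open set of vectors q = (q_1, …, q_M) with q_r > 0 for all r and Σ_r q_r < 1, and suppose q ↦ x_0(q) is a differentiable map on Ω taking values in strictly positive vectors and satisfying x_{0,r}(q) · ∂B^{(M)}/∂x_r(x_0(q)) = k q_r B^{(M)}(x_0(q)) for each r = 1, …, M and each q ∈ Ω. Define f(q) = (j/k)·log B^{(M)}(x_0(q)) − j·Σ_{r=1}^M q_r log x_{0,r}(q) − (j−1)·h(q). Then for every q ∈ Ω and every r = 1, …, M, ∂f/∂q_r (q) = (j−1)·log( q_r / (1 − Σ_{s=1}^M q_s) ) − j·log x_{0,r}(q). -/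
open Finset MvPolynomial

/-- The multivariate entropy function
`h(q) = -∑_r q_r log q_r - (1 - ∑_r q_r) log (1 - ∑_r q_r)`. -/
noncomputable def entropyFun (M : ℕ) (q : Fin M → ℝ) : ℝ :=
  -∑ r, q r * Real.log (q r) - (1 - ∑ r, q r) * Real.log (1 - ∑ r, q r)

/-- `f(q) = (j/k) log B^{(M)}(x₀(q)) - j ∑_r q_r log x₀_r(q) - (j-1) h(q)`. -/
noncomputable def fFun (j k M : ℕ) (x0 : (Fin M → ℝ) → Fin M → ℝ)
    (q : Fin M → ℝ) : ℝ :=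
  ((j : ℝ) / (k : ℝ)) * Real.log (MvPolynomial.eval (x0 q) (Bpoly k M)) -
    (j : ℝ) * ∑ r, q r * Real.log (x0 q r) - ((j : ℝ) - 1) * entropyFun M q

/-! Differentiating `log B(x₀(q))` sees `x₀` only through `∑_s (∂_s B / B) dx₀_s`, and the
stationarity condition `x₀_s ∂_s B = k q_s B` turns this into `k ∑_s q_s d(log x₀_s)`. After the
factor `j / k` it cancels the part of `d(j ∑_s q_s log x₀_s)` coming from the variation of `x₀`,
which leaves `-j log x₀_r`; the entropy contributes `∂h/∂q_r = -log (q_r / (1 - ∑_s q_s))`. -/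

section Calculus

variable {σ : Type*} [Fintype σ]

theorem MvPolynomial.hasFDerivAt_eval [DecidableEq σ] (p : MvPolynomial σ ℝ) (x : σ → ℝ) :
    HasFDerivAt (fun y => eval y p)
      (∑ s, eval x (pderiv s p) • (ContinuousLinearMap.proj s : (σ → ℝ) →L[ℝ] ℝ)) x := by
  induction p using MvPolynomial.induction_on with
  | C a => simpa using hasFDerivAt_const a x
  | add p q hp hq =>
      simpa only [map_add, add_smul, Finset.sum_add_distrib] using hp.fun_add hq
  | mul_X p n hp =>
      simp only [eval_mul, eval_X]
      refine (hp.fun_mul (hasFDerivAt_apply n x)).congr_fderiv ?_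
      ext v
      simp only [add_apply, smul_apply, ContinuousLinearMap.proj_apply, _root_.sum_apply,
        smul_eq_mul, Finset.mul_sum, Derivation.leibniz, pderiv_X, Pi.single_apply, mul_ite,
        mul_one, mul_zero, map_add, apply_ite (eval x), map_zero, map_mul, eval_X]
      simp only [add_mul, Finset.sum_add_distrib, ite_mul, zero_mul, Finset.sum_ite_eq,
        Finset.mem_univ, if_true, mul_assoc]

theorem MvPolynomial.hasFDerivAt_log_eval_of_mul_pderiv_eq [DecidableEq σ] (p : MvPolynomial σ ℝ)
    {x w : σ → ℝ} (c : ℝ) (hp : eval x p ≠ 0) (hx : ∀ s, x s ≠ 0)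
    (h : ∀ s, x s * eval x (pderiv s p) = c * w s * eval x p) :
    HasFDerivAt (fun y => Real.log (eval y p))
      (∑ s, (c * w s / x s) • (ContinuousLinearMap.proj s : (σ → ℝ) →L[ℝ] ℝ)) x := by
  refine ((hasFDerivAt_eval p x).log hp).congr_fderiv ?_
  rw [Finset.smul_sum]
  refine Finset.sum_congr rfl fun s _ => ?_
  rw [smul_smul]
  congr 1
  rw [inv_mul_eq_div, div_eq_div_iff hp (hx s), mul_comm _ (x s), h s]

theorem hasFDerivAt_sum_mul_log {x : (σ → ℝ) → σ → ℝ} {D : (σ → ℝ) →L[ℝ] σ → ℝ} {q : σ → ℝ}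
    (hx : HasFDerivAt x D q) (hxq : ∀ s, x q s ≠ 0) :
    HasFDerivAt (fun q' => ∑ s, q' s * Real.log (x q' s))
      (∑ s, ((q s / x q s) • (ContinuousLinearMap.proj s).comp D +
        Real.log (x q s) • (ContinuousLinearMap.proj s : (σ → ℝ) →L[ℝ] ℝ))) q := by
  refine HasFDerivAt.fun_sum fun s _ => ?_
  have hxs : HasFDerivAt (fun q' => x q' s) ((ContinuousLinearMap.proj s).comp D) q :=
    (hasFDerivAt_apply (𝕜 := ℝ) (F' := fun _ => ℝ) s (x q)).comp q hx
  refine ((hasFDerivAt_apply s q).mul (hxs.log (hxq s))).congr_fderiv ?_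
  rw [smul_smul, div_eq_mul_inv]

end Calculus

theorem zero_mem_Sset (k M : ℕ) : (0 : Fin M → ℕ) ∈ Sset k M := by
  simp [Sset, Fintype.mem_piFinset]

theorem one_le_eval_Bpoly (k : ℕ) {M : ℕ} {x : Fin M → ℝ} (hx : 0 ≤ x) :
    1 ≤ eval x (Bpoly k M) := by
  rw [Bpoly, map_sum]
  refine le_of_eq_of_le ?_ (Finset.single_le_sum (fun u _ => ?_) (zero_mem_Sset k M))
  · simp [multCoeff, Nat.div_self (Nat.factorial_pos k)]
  · simp only [map_mul, eval_C, map_prod, eval_X, map_pow]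
    exact mul_nonneg (Nat.cast_nonneg _) (Finset.prod_nonneg fun r _ => pow_nonneg (hx r) _)

theorem hasFDerivAt_entropyFun {M : ℕ} {q : Fin M → ℝ} (hq : ∀ r, q r ≠ 0)
    (hsum : ∑ r, q r ≠ 1) :
    HasFDerivAt (entropyFun M)
      (∑ s, (-Real.log (q s / (1 - ∑ r, q r))) •
        (ContinuousLinearMap.proj s : (Fin M → ℝ) →L[ℝ] ℝ)) q := by
  have hS : 1 - ∑ r, q r ≠ 0 := sub_ne_zero.2 hsum.symm
  have hrest : HasFDerivAt (fun q' : Fin M → ℝ => 1 - ∑ r, q' r)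
      (-∑ s, (ContinuousLinearMap.proj s : (Fin M → ℝ) →L[ℝ] ℝ)) q := by
    simpa using (HasFDerivAt.fun_sum fun s _ => hasFDerivAt_apply s q).const_sub 1
  have hmain := (hasFDerivAt_sum_mul_log (hasFDerivAt_id q) hq).fun_neg.fun_sub
    (hrest.fun_mul (hrest.log hS))
  refine hmain.congr_fderiv ?_
  ext v
  simp only [id_eq, div_self (hq _), ContinuousLinearMap.comp_id, one_smul,
    Finset.sum_add_distrib, neg_add_rev, smul_neg, smul_inv_smul₀ hS, sub_apply, add_apply,
    neg_apply, _root_.sum_apply, smul_apply, ContinuousLinearMap.proj_apply, smul_eq_mul,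
    Finset.mul_sum, Real.log_div (hq _) hS, neg_sub, sub_mul, Finset.sum_sub_distrib]
  ring

theorem hasFDerivAt_fFun (j : ℕ) {k M : ℕ} (hk : k ≠ 0) {x0 : (Fin M → ℝ) → Fin M → ℝ}
    {q : Fin M → ℝ} (hq : ∀ r, q r ≠ 0) (hsum : ∑ r, q r ≠ 1)
    (hx0 : DifferentiableAt ℝ x0 q) (hx0pos : ∀ r, 0 < x0 q r)
    (hx0eq : ∀ r, x0 q r * eval (x0 q) (pderiv r (Bpoly k M)) =
      k * q r * eval (x0 q) (Bpoly k M)) :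
    HasFDerivAt (fFun j k M x0)
      (∑ s, (((j : ℝ) - 1) * Real.log (q s / (1 - ∑ r, q r)) - j * Real.log (x0 q s)) •
        (ContinuousLinearMap.proj s : (Fin M → ℝ) →L[ℝ] ℝ)) q := by
  have hD := hx0.hasFDerivAt
  have hx0ne (s : Fin M) : x0 q s ≠ 0 := (hx0pos s).ne'
  have hB : eval (x0 q) (Bpoly k M) ≠ 0 :=
    (one_pos.trans_le (one_le_eval_Bpoly k fun r => (hx0pos r).le)).ne'
  have hlogB :=
    (MvPolynomial.hasFDerivAt_log_eval_of_mul_pderiv_eq (Bpoly k M) k hB hx0ne hx0eq).comp q hD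
  have hmain := ((hlogB.const_mul ((j : ℝ) / k)).fun_sub
    ((hasFDerivAt_sum_mul_log hD hx0ne).const_mul (j : ℝ))).fun_sub
    ((hasFDerivAt_entropyFun hq hsum).const_mul ((j : ℝ) - 1))
  refine hmain.congr_fderiv ?_
  ext v
  simp only [Finset.sum_add_distrib, smul_add, sub_apply, smul_apply,
    ContinuousLinearMap.comp_apply, _root_.sum_apply, ContinuousLinearMap.proj_apply, smul_eq_mul,
    Finset.mul_sum, add_apply, neg_mul, Finset.sum_neg_distrib, mul_neg, sub_mul, one_mul,
    Finset.sum_sub_distrib, neg_sub]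
  have hk' : (k : ℝ) ≠ 0 := Nat.cast_ne_zero.2 hk
  have hcancel : ∑ s, (j : ℝ) / k * (k * q s / x0 q s * fderiv ℝ x0 q v s) =
      ∑ s, (j : ℝ) * (q s / x0 q s * fderiv ℝ x0 q v s) :=
    Finset.sum_congr rfl fun s _ => by field_simp
  rw [hcancel]
  simp only [mul_assoc]
  ring

theorem stmt_13_general (j k M : ℕ) (hk : 1 ≤ k)
    (Ω : Set (Fin M → ℝ)) (hΩopen : IsOpen Ω)
    (hΩ : ∀ q ∈ Ω, (∀ r, 0 < q r) ∧ ∑ r, q r < 1)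
    (x0 : (Fin M → ℝ) → Fin M → ℝ)
    (hx0diff : DifferentiableOn ℝ x0 Ω)
    (hx0pos : ∀ q ∈ Ω, ∀ r, 0 < x0 q r)
    (hx0eq : ∀ q ∈ Ω, ∀ r,
      x0 q r * MvPolynomial.eval (x0 q) (MvPolynomial.pderiv r (Bpoly k M)) =
        (k : ℝ) * q r * MvPolynomial.eval (x0 q) (Bpoly k M)) :
    ∀ q ∈ Ω, DifferentiableAt ℝ (fFun j k M x0) q ∧
      ∀ r : Fin M, fderiv ℝ (fFun j k M x0) q (Pi.single r 1) =
        ((j : ℝ) - 1) * Real.log (q r / (1 - ∑ s, q s)) -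
          (j : ℝ) * Real.log (x0 q r) := by
  intro q hq
  obtain ⟨hqpos, hqsum⟩ := hΩ q hq
  have hf := hasFDerivAt_fFun j (by omega) (fun r => (hqpos r).ne') hqsum.ne
    ((hx0diff q hq).differentiableAt (hΩopen.mem_nhds hq)) (hx0pos q hq) (hx0eq q hq)
  refine ⟨hf.differentiableAt, fun r => ?_⟩
  simp [hf.fderiv, Pi.single_apply]

/-- on an open set `Ω` of positive vectors `q` with `∑ q_r < 1`
on which a differentiable map `q ↦ x₀(q)` of strictly positive solutions of
`x₀_r ∂B^{(M)}/∂x_r(x₀) = k q_r B^{(M)}(x₀)` is given, `f` is differentiable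
and `∂f/∂q_r(q) = (j-1) log(q_r / (1 - ∑_s q_s)) - j log x₀_r(q)`. -/
theorem stmt_13 (j k M : ℕ) (hj : 1 ≤ j) (hk : 1 ≤ k) (hM : 1 ≤ M)
    (Ω : Set (Fin M → ℝ)) (hΩopen : IsOpen Ω)
    (hΩ : ∀ q ∈ Ω, (∀ r, 0 < q r) ∧ ∑ r, q r < 1)
    (x0 : (Fin M → ℝ) → Fin M → ℝ)
    (hx0diff : DifferentiableOn ℝ x0 Ω)
    (hx0pos : ∀ q ∈ Ω, ∀ r, 0 < x0 q r)
    (hx0eq : ∀ q ∈ Ω, ∀ r,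
      x0 q r * MvPolynomial.eval (x0 q) (MvPolynomial.pderiv r (Bpoly k M)) =
        (k : ℝ) * q r * MvPolynomial.eval (x0 q) (Bpoly k M)) :
    ∀ q ∈ Ω, DifferentiableAt ℝ (fFun j k M x0) q ∧
      ∀ r : Fin M, fderiv ℝ (fFun j k M x0) q (Pi.single r 1) =
        ((j : ℝ) - 1) * Real.log (q r / (1 - ∑ s, q s)) -
          (j : ℝ) * Real.log (x0 q r) :=
  stmt_13_general j k M hk Ω hΩopen hΩ x0 hx0diff hx0pos hx0eq
end
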